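/- arXiv:2004.07158 — 5 statements merged into one kernel-verified Lean document; each statement's English description precedes it below -/
import Mathlib

section
/- For all natural numbers a and b and every element q of a commutative ring, one has \(-2(a+1)(b+1) + (2a+1)(b+1) + (2b+1)(a+1) + 2\sum_{s=1}^{b}\sum_{t=1}^{a}\big(q^{\min(s,t)}-1\big) = 2\sum_{s=0}^{\min(a,b)} (a+b+1-2s)\, q^{s} - (a+b+2)\). -/
open Finset

lemma key_minsum {R : Type*} [CommRing R] (q : R) (a b : ℕ) :
    ∑ s ∈ Finset.Icc 1 b, ∑ t ∈ Finset.Icc 1 a, q ^ (min s t)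
      = ∑ k ∈ Finset.Icc 1 (min a b), ((a : R) + (b : R) + 1 - 2 * (k : R)) * q ^ k := by
  induction b with
  | zero => simp
  | succ b ih =>
    rw [Finset.sum_Icc_succ_top (Nat.le_add_left 1 b), ih]
    rcases le_or_gt a b with h | h
    · rw [min_eq_left h, min_eq_left (h.trans (Nat.le_succ b))]
      rw [← Finset.sum_add_distrib]
      apply Finset.sum_congr rfl
      intro t ht
      simp only [Finset.mem_Icc] at ht
      rw [min_eq_right (ht.2.trans (h.trans (Nat.le_succ b)))]
      push_cast
      ring
    · rw [min_eq_right h.le, min_eq_right h]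
      have hsplit : Finset.Icc 1 a = Finset.Icc 1 (b+1) ∪ Finset.Icc (b+2) a := by
        ext x; simp only [Finset.mem_Icc, Finset.mem_union]; omega
      have hdisj : Disjoint (Finset.Icc 1 (b+1)) (Finset.Icc (b+2) a) := by
        simp only [Finset.disjoint_left, Finset.mem_Icc]
        omega
      rw [hsplit, Finset.sum_union hdisj]
      have h1 : ∑ t ∈ Finset.Icc 1 (b+1), q ^ (min (b+1) t)
          = ∑ t ∈ Finset.Icc 1 (b+1), q ^ t := by
        apply Finset.sum_congr rfl
        intro t ht
        simp only [Finset.mem_Icc] at ht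
        rw [min_eq_right ht.2]
      have h2 : ∑ t ∈ Finset.Icc (b+2) a, q ^ (min (b+1) t)
          = ((a - (b+1) : ℕ) : R) * q ^ (b+1) := by
        have hc : ∀ t ∈ Finset.Icc (b+2) a, q ^ (min (b+1) t) = q ^ (b+1) := by
          intro t ht
          simp only [Finset.mem_Icc] at ht
          rw [min_eq_left (by omega)]
        rw [Finset.sum_congr rfl hc, Finset.sum_const, Nat.card_Icc, nsmul_eq_mul]
        congr 2
        omega
      rw [h1, h2, Finset.sum_Icc_succ_top (Nat.le_add_left 1 b), Nat.cast_sub h]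
      rw [Finset.sum_Icc_succ_top (Nat.le_add_left 1 b)]
      have hc2 : ∑ k ∈ Finset.Icc 1 b, ((a : R) + ((b+1 : ℕ) : R) + 1 - 2 * (k : R)) * q ^ k
          = ∑ k ∈ Finset.Icc 1 b, (((a : R) + (b : R) + 1 - 2 * (k : R)) * q ^ k + q ^ k) := by
        apply Finset.sum_congr rfl
        intro k _
        push_cast
        ring
      rw [hc2, Finset.sum_add_distrib]
      push_cast
      ring

/-- The arithmetic content of Theorem 5.5: combining the exceptional divisor
self-intersection, the intersections with the exceptional divisor, and the pairwise
intersections of quasi-canonical lifting divisors gives the closed form `μ_q(T)`. -/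
theorem intersection_combination_eq_mu {R : Type*} [CommRing R] (q : R) (a b : ℕ) :
    -2 * ((a : R) + 1) * ((b : R) + 1)
      + (2 * (a : R) + 1) * ((b : R) + 1) + (2 * (b : R) + 1) * ((a : R) + 1)
      + 2 * ∑ s ∈ Finset.Icc 1 b, ∑ t ∈ Finset.Icc 1 a, (q ^ (min s t) - 1) =
    2 * ∑ s ∈ Finset.range (min a b + 1), ((a : R) + (b : R) + 1 - 2 * (s : R)) * q ^ s
      - ((a : R) + (b : R) + 2) := by
  have hL : ∑ s ∈ Finset.Icc 1 b, ∑ t ∈ Finset.Icc 1 a, (q ^ (min s t) - 1)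
      = (∑ s ∈ Finset.Icc 1 b, ∑ t ∈ Finset.Icc 1 a, q ^ (min s t)) - (b : R) * a := by
    simp [Finset.sum_sub_distrib, Nat.card_Icc, mul_comm]
  have hR : ∑ s ∈ Finset.range (min a b + 1), ((a : R) + (b : R) + 1 - 2 * (s : R)) * q ^ s
      = ((a : R) + (b : R) + 1)
        + ∑ s ∈ Finset.Icc 1 (min a b), ((a : R) + (b : R) + 1 - 2 * (s : R)) * q ^ s := by
    rw [Finset.range_eq_Ico, Finset.Ico_add_one_right_eq_Icc,
      Finset.Icc_eq_cons_Ioc (Nat.zero_le _), Finset.sum_cons, ← Finset.Icc_add_one_left_eq_Ioc]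
    simp
  rw [hL, key_minsum, hR]
  ring
end

section
/- Let R be a commutative ring, let q be an element of R, and let \(b \ge 1\) be an integer. Define the polynomials \(A = \sum_{e_2=1}^{b}\sum_{e_1=e_2}^{b} (q-1)^2 q^{e_1-e_2} X^{e_1+e_2}\) and \(B = \sum_{e_2=2}^{b}\sum_{e_1=1}^{e_2-1} (q-1)^2 q^{e_2-e_1-1} X^{e_1+e_2}\) in R[X]. Then for every integer k with \(2 \le k \le b+1\), the coefficient of \(X^{k}\) in \(A+B\) is \((q-1)(q^{k-1}-1)\), and for every integer k with \(b+2 \le k \le 2b\), the coefficient of \(X^{k}\) in \(A+B\) is \((q-1)(q^{2b-k+1}-1)\). -/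
open Polynomial

private lemma inner_sum_eq {R : Type*} [CommRing R] (f : ℕ → R) (s : Finset ℕ) (e2 k : ℕ) :
    (∑ e1 ∈ s, if k = e1 + e2 then f e1 else 0)
      = if e2 ≤ k ∧ k - e2 ∈ s then f (k - e2) else 0 := by
  split_ifs with h
  · rw [Finset.sum_eq_single (k - e2)]
    · rw [if_pos (by omega)]
    · intro e1 _ hne
      exact if_neg (by omega)
    · intro hns; exact absurd h.2 hns
  · refine Finset.sum_eq_zero fun e1 he1 => if_neg fun heq => ?_
    exact h ⟨by omega, by rwa [show k - e2 = e1 by omega]⟩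

private lemma sum_geom_reindex {R : Type*} [CommRing R] (q : R) (k lo hi : ℕ)
    (h1 : 1 ≤ lo) (h2 : lo ≤ hi) (h3 : lo + hi = k) :
    (∑ e2 ∈ Finset.Icc lo hi,
        q ^ (if e2 ≤ k - e2 then k - e2 - e2 else e2 - (k - e2) - 1))
      = ∑ i ∈ Finset.range (hi + 1 - lo), q ^ i := by
  refine Finset.sum_nbij'
    (fun e2 => if e2 ≤ k - e2 then k - e2 - e2 else e2 - (k - e2) - 1)
    (fun i => if (k - i) % 2 = 0 then (k - i) / 2 else (k + i + 1) / 2)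
    ?_ ?_ ?_ ?_ (fun a _ => rfl) <;>
  · intro x hx
    simp only [Finset.mem_Icc, Finset.mem_range] at *
    split_ifs <;> omega

/-- Lemma 6.9: the coefficients of `X^k` in `A + B`, where `A` and `B` are the double sums
appearing in the simplification of the local density polynomial. -/
theorem coeff_A_add_B {R : Type*} [CommRing R] (q : R) (b : ℕ) (hb : 1 ≤ b)
    (A B : R[X])
    (hA : A = ∑ e2 ∈ Finset.Icc 1 b, ∑ e1 ∈ Finset.Icc e2 b,
        C ((q - 1) ^ 2 * q ^ (e1 - e2)) * X ^ (e1 + e2))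
    (hB : B = ∑ e2 ∈ Finset.Icc 2 b, ∑ e1 ∈ Finset.Icc 1 (e2 - 1),
        C ((q - 1) ^ 2 * q ^ (e2 - e1 - 1)) * X ^ (e1 + e2)) :
    (∀ k, 2 ≤ k → k ≤ b + 1 → (A + B).coeff k = (q - 1) * (q ^ (k - 1) - 1)) ∧
    (∀ k, b + 2 ≤ k → k ≤ 2 * b → (A + B).coeff k = (q - 1) * (q ^ (2 * b - k + 1) - 1)) := by
  subst hA hB
  have key : ∀ k lo hi : ℕ, 1 ≤ lo → lo ≤ hi → lo + hi = k → hi ≤ b → (hi = b ∨ lo = 1) →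
      ((∑ e2 ∈ Finset.Icc 1 b, ∑ e1 ∈ Finset.Icc e2 b,
          C ((q - 1) ^ 2 * q ^ (e1 - e2)) * X ^ (e1 + e2)) +
        ∑ e2 ∈ Finset.Icc 2 b, ∑ e1 ∈ Finset.Icc 1 (e2 - 1),
          C ((q - 1) ^ 2 * q ^ (e2 - e1 - 1)) * X ^ (e1 + e2)).coeff k
        = (q - 1) * (q ^ (hi + 1 - lo) - 1) := by
    intro k lo hi h1lo hlohi' hlohi hhib hmax
    rw [coeff_add, Polynomial.finset_sum_coeff, Polynomial.finset_sum_coeff]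
    simp only [Polynomial.finset_sum_coeff, Polynomial.coeff_C_mul, Polynomial.coeff_X_pow,
      mul_ite, mul_one, mul_zero]
    rw [Finset.sum_congr rfl (fun e2 _ => inner_sum_eq (fun e1 => (q-1)^2 * q^(e1 - e2)) _ e2 k),
      Finset.sum_congr rfl (fun e2 _ => inner_sum_eq (fun e1 => (q-1)^2 * q^(e2 - e1 - 1)) _ e2 k)]
    -- extend the second sum from Icc 2 b to Icc 1 b
    rw [show (∑ e2 ∈ Finset.Icc 2 b,
          if e2 ≤ k ∧ k - e2 ∈ Finset.Icc 1 (e2 - 1) then (q-1)^2 * q^(e2 - (k - e2) - 1) else 0)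
        = ∑ e2 ∈ Finset.Icc 1 b,
          if e2 ≤ k ∧ k - e2 ∈ Finset.Icc 1 (e2 - 1) then (q-1)^2 * q^(e2 - (k - e2) - 1) else 0
      from Finset.sum_subset (Finset.Icc_subset_Icc (by omega) le_rfl)
        (by
          intro e2 he2 hne
          simp only [Finset.mem_Icc] at *
          rw [if_neg]
          omega)]
    rw [← Finset.sum_add_distrib]
    have hsub : Finset.Icc lo hi ⊆ Finset.Icc 1 b := Finset.Icc_subset_Icc (by omega) hhib
    rw [← Finset.sum_subset hsub (by
      intro e2 he2 hne
      simp only [Finset.mem_Icc] at *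
      rw [if_neg (by omega), if_neg (by omega), add_zero])]
    rw [show (∑ e2 ∈ Finset.Icc lo hi,
          ((if e2 ≤ k ∧ k - e2 ∈ Finset.Icc e2 b then (q-1)^2 * q^(k - e2 - e2) else 0) +
            if e2 ≤ k ∧ k - e2 ∈ Finset.Icc 1 (e2 - 1) then (q-1)^2 * q^(e2 - (k - e2) - 1) else 0))
        = ∑ e2 ∈ Finset.Icc lo hi,
            (q-1)^2 * q^(if e2 ≤ k - e2 then k - e2 - e2 else e2 - (k - e2) - 1)
      from Finset.sum_congr rfl fun e2 he2 => by
        simp only [Finset.mem_Icc] at he2 ⊢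
        by_cases hc : e2 ≤ k - e2
        · rw [if_pos (by omega), if_neg (by omega), add_zero, if_pos hc]
        · rw [if_neg (by omega), if_pos (by omega), zero_add, if_neg hc]]
    rw [← Finset.mul_sum, sum_geom_reindex q k lo hi h1lo hlohi' hlohi,
      show (q-1)^2 = (q-1) * (q-1) from sq (q-1), mul_assoc, mul_geom_sum]
  constructor
  · intro k h1 h2
    rw [key k 1 (k - 1) le_rfl (by omega) (by omega) (by omega) (Or.inr rfl),
      Nat.add_sub_cancel]
  · intro k h1 h2
    rw [key k (k - b) b (by omega) (by omega) (by omega) le_rfl (Or.inl rfl),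
      show b + 1 - (k - b) = 2 * b - k + 1 from by omega]
end

section
/- For every real number \(q > 1\), every real number \(t > 0\), and every natural number b, the series \(\sum_{e=0}^{\infty} \frac{q^{1-2e}}{q-1}\) converges and \(\frac{1}{q}\Big(1-\frac{1}{q}\Big)^{2}\Big[\sum_{e=-2b-1}^{-1} q^{2(e+1)}\, t^{e}\, \frac{q^{1-2e}}{q-1} + \sum_{e=0}^{\infty} \frac{q^{1-2e}}{q-1}\Big] = (q-1)\sum_{e=-2b-1}^{-1} t^{e} + \frac{1}{q+1}\). -/
/-!
The series is geometric with ratio `q⁻²`, so it sums to `q³ / ((q² - 1)(q - 1))`, and in each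
term of the finite sum the powers of `q` collapse to `q³`. After multiplying by
`q⁻¹ (1 - q⁻¹)² = (q - 1)² / q³` both pieces simplify to the right-hand side.
-/

theorem zpow_one_sub_two_mul_natCast {K : Type*} [DivisionRing K] {q : K} (hq : q ≠ 0) (e : ℕ) :
    q ^ ((1 : ℤ) - 2 * (e : ℤ)) = q * ((q ^ 2)⁻¹) ^ e := by
  rw [zpow_sub₀ hq, zpow_one, zpow_mul, zpow_natCast, zpow_ofNat, inv_pow,
    div_eq_mul_inv]

theorem hasSum_zpow_one_sub_two_mul {q : ℝ} (hq : 1 < q) :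
    HasSum (fun e : ℕ => q ^ ((1 : ℤ) - 2 * (e : ℤ))) (q ^ 3 / (q ^ 2 - 1)) := by
  have hq0 : q ≠ 0 := by positivity
  have hratio : (q ^ 2)⁻¹ < 1 := inv_lt_one_of_one_lt₀ (one_lt_pow₀ hq two_ne_zero)
  have hgeom := (hasSum_geometric_of_lt_one (by positivity) hratio).mul_left q
  simp only [← zpow_one_sub_two_mul_natCast hq0] at hgeom
  have hq21 : q ^ 2 - 1 ≠ 0 := by nlinarith
  have hlimit : q * (1 - (q ^ 2)⁻¹)⁻¹ = q ^ 3 / (q ^ 2 - 1) := by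
    field_simp
  rwa [hlimit] at hgeom

theorem sum_zpow_mul_zpow_one_sub_two_mul {K : Type*} [Field K] {q : K} (hq : q ≠ 0) (t : K)
    (s : Finset ℤ) :
    ∑ e ∈ s, q ^ (2 * (e + 1)) * t ^ e * (q ^ (1 - 2 * e) / (q - 1)) =
      q ^ 3 / (q - 1) * ∑ e ∈ s, t ^ e := by
  rw [Finset.mul_sum]
  refine Finset.sum_congr rfl fun e _ => ?_
  have hq3 : q ^ (2 * (e + 1)) * q ^ (1 - 2 * e) = q ^ 3 := by
    rw [← zpow_add₀ hq]
    ring_nf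
    exact zpow_ofNat q 3
  rw [← hq3]
  ring

theorem antidiagonal_contribution_general {q t : ℝ} (hq : 1 < q) (b : ℕ) :
    (Summable fun e : ℕ => q ^ ((1 : ℤ) - 2 * (e : ℤ)) / (q - 1)) ∧
    (1 / q) * (1 - 1 / q) ^ 2 *
        ((∑ e ∈ Finset.Icc (-2 * (b : ℤ) - 1) (-1),
            q ^ (2 * (e + 1)) * t ^ e * (q ^ (1 - 2 * e) / (q - 1)))
          + ∑' e : ℕ, q ^ ((1 : ℤ) - 2 * (e : ℤ)) / (q - 1)) =
      (q - 1) * (∑ e ∈ Finset.Icc (-2 * (b : ℤ) - 1) (-1), t ^ e) + 1 / (q + 1) := by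
  have hseries := (hasSum_zpow_one_sub_two_mul hq).div_const (q - 1)
  refine ⟨hseries.summable, ?_⟩
  rw [hseries.tsum_eq, sum_zpow_mul_zpow_one_sub_two_mul (by positivity)]
  have hq1 : q - 1 ≠ 0 := by linarith
  rw [show q ^ 2 - 1 = (q - 1) * (q + 1) by ring]
  field_simp

/-- Equation (6.15): evaluation of the contribution of the anti-diagonal orbit
representatives to the local density `α(S_r, T)`, with `t = q^{2r}`. -/
theorem antidiagonal_contribution {q t : ℝ} (hq : 1 < q) (ht : 0 < t) (b : ℕ) :
    (Summable fun e : ℕ => q ^ ((1 : ℤ) - 2 * (e : ℤ)) / (q - 1)) ∧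
    (1 / q) * (1 - 1 / q) ^ 2 *
        ((∑ e ∈ Finset.Icc (-2 * (b : ℤ) - 1) (-1),
            q ^ (2 * (e + 1)) * t ^ e * (q ^ (1 - 2 * e) / (q - 1)))
          + ∑' e : ℕ, q ^ ((1 : ℤ) - 2 * (e : ℤ)) / (q - 1)) =
      (q - 1) * (∑ e ∈ Finset.Icc (-2 * (b : ℤ) - 1) (-1), t ^ e) + 1 / (q + 1) :=
  antidiagonal_contribution_general hq b
end

section
/- Let R be a commutative ring, let \(q \in R\), and define in R[X], for integers \(a \ge b \ge 0\), \(\nu(a,b) = \sum_{e=0}^{b} q^{e}X^{e} + \sum_{e=a+1}^{a+b+1} q^{a+b+1-e}X^{e}\), and for integers \(a \ge 0\), \(\omega(a) = \sum_{e=0}^{a} q^{e}X^{e} + \sum_{e=a+1}^{2a} q^{2a-e}X^{e}\). Then for every integer \(a \ge 1\): \(\omega(a) - (q+1)X\,\nu(a-1,a-1) + qX^{2}\,\omega(a-1) = 1 - X\). -/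
/-!
With `G m = ∑_{i<m} (qX)^i` and `H m = ∑_{i<m} q^i X^(m-1-i)`, reflecting the tail sums gives
`ω(k) = G(k+1) + X^(k+1) H(k)` and `ν(k,k) = G(k+1) + X^(k+1) H(k+1)`. The identity is then a
linear combination of `G(m+1) = qX G(m) + 1`, `(1 - qX) G(m) = 1 - (qX)^m` and
`H(m+1) = q^m + X H(m)`.
-/

open Polynomial Finset

section

variable {R : Type*} [CommRing R]

theorem sum_range_C_pow_mul_X_pow (q : R) (m : ℕ) :
    ∑ e ∈ range m, C (q ^ e) * X ^ e = ∑ i ∈ range m, (C q * X) ^ i := by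
  simp only [map_pow, mul_pow]

theorem sum_Icc_C_pow_sub_mul_X_pow (q : R) (k m : ℕ) :
    ∑ e ∈ Icc (k + 1) (k + m), C (q ^ (k + m - e)) * X ^ e
      = X ^ (k + 1) * ∑ i ∈ range m, C q ^ i * X ^ (m - 1 - i) := by
  rw [mul_sum]
  refine sum_nbij' (fun e => k + m - e) (fun i => k + m - i) ?_ ?_ ?_ ?_ ?_ <;>
    intro e he <;> simp only [mem_Icc, mem_range] at he ⊢
  any_goals omega
  rw [map_pow, mul_left_comm, ← pow_add, show k + 1 + (m - 1 - (k + m - e)) = e by omega]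

end

/-- Case 2, sub-case (e) of the proof of the fourth local density formula of Theorem 6.2:
the Kitaoka-style induction identity for `ω(a)` with `a ≥ 1`. -/
theorem omega_recursion {R : Type*} [CommRing R] (q : R)
    (ν : ℕ → ℕ → R[X]) (ω : ℕ → R[X])
    (hν : ∀ a b : ℕ, b ≤ a →
      ν a b = (∑ e ∈ Finset.range (b + 1), C (q ^ e) * X ^ e)
        + ∑ e ∈ Finset.Icc (a + 1) (a + b + 1), C (q ^ (a + b + 1 - e)) * X ^ e)
    (hω : ∀ a : ℕ,
      ω a = (∑ e ∈ Finset.range (a + 1), C (q ^ e) * X ^ e)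
        + ∑ e ∈ Finset.Icc (a + 1) (2 * a), C (q ^ (2 * a - e)) * X ^ e)
    (a : ℕ) (ha : 1 ≤ a) :
    ω a - (C q + 1) * X * ν (a - 1) (a - 1) + C q * X ^ 2 * ω (a - 1) = 1 - X := by
  obtain ⟨n, rfl⟩ := Nat.exists_eq_add_of_le' ha
  set G : ℕ → R[X] := fun m => ∑ i ∈ range m, (C q * X) ^ i
  set H : ℕ → R[X] := fun m => ∑ i ∈ range m, C q ^ i * X ^ (m - 1 - i) with hH
  have hω_eq (k : ℕ) : ω k = G (k + 1) + X ^ (k + 1) * H k := by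
    rw [hω, two_mul, sum_Icc_C_pow_sub_mul_X_pow, sum_range_C_pow_mul_X_pow]
  have hν_eq (k : ℕ) : ν k k = G (k + 1) + X ^ (k + 1) * H (k + 1) := by
    rw [hν k k le_rfl, add_assoc k k 1, sum_Icc_C_pow_sub_mul_X_pow, sum_range_C_pow_mul_X_pow]
  have hG_succ : G (n + 2) = C q * X * G (n + 1) + 1 := geom_sum_succ
  have hG_mul : (1 - C q * X) * G (n + 1) = 1 - (C q * X) ^ (n + 1) := mul_neg_geom_sum _ _
  have hH_succ : H (n + 1) = C q ^ n + X * H n := by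
    simp only [hH, add_tsub_cancel_right]
    exact geom_sum₂_succ_eq _ _
  rw [Nat.add_sub_cancel, hω_eq, hν_eq, hω_eq]
  linear_combination hG_succ - X * hG_mul - C q * X ^ (n + 2) * hH_succ
end

section
/- For every real number \(q > 1\), every real number \(y > 0\), and every natural number a, define for each integer \(e \ge -a-2\) the term \(f(e) = \frac{1}{q}\big(q^{\min(a+e+1,0)} - 2q^{\min(a+e+2,0)-1} + q^{\min(a+e+3,0)-2}\big)\, q^{2\min(e+1,0)}\, y^{\min(e,0)}\, \frac{q^{1-2e}}{q-1}\). Then the series \(\sum_{e=0}^{\infty} f(e)\) converges and \(f(-a-2) + \sum_{e=-a-1}^{-1} f(e) + \sum_{e=0}^{\infty} f(e) = -y^{-a-2} + (q-1)\sum_{e=-a-1}^{-1} y^{e} + \frac{1}{q+1}\). -/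
/-!
For `e ≥ -a - 1` all three minima in the bracketed second difference vanish and it equals
`(q - 1)² / q³`; at `e = -a - 2` it equals `-(q - 1) / q³`. On `-a - 2 ≤ e ≤ -1` the powers of `q` outside it
multiply to `q³ / (q - 1)`, so the terms there are `-y ^ e` and `(q - 1) y ^ e`, while for
`e = n ≥ 0` they form the geometric series `(q - 1) q ^ (-2(n + 1))` with sum `1 / (q + 1)`.
-/

noncomputable def antidiagonalTerm (q y : ℝ) (a : ℕ) (e : ℤ) : ℝ :=
  (1 / q) * (q ^ (min ((a : ℤ) + e + 1) 0) - 2 * q ^ (min ((a : ℤ) + e + 2) 0 - 1)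
      + q ^ (min ((a : ℤ) + e + 3) 0 - 2))
    * q ^ (2 * min (e + 1) 0) * y ^ (min e 0) * (q ^ (1 - 2 * e) / (q - 1))

namespace antidiagonalTerm

variable {q : ℝ}

lemma zpow_two_mul_add_one_mul_zpow_one_sub (hq : q ≠ 0) (e : ℤ) :
    q ^ (2 * (e + 1)) * q ^ (1 - 2 * e) = q ^ 3 := by
  rw [← zpow_add₀ hq, show 2 * (e + 1) + (1 - 2 * e) = ((3 : ℕ) : ℤ) by lia, zpow_natCast]

lemma zpow_one_sub_two_mul_natCast (hq : q ≠ 0) (n : ℕ) :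
    q ^ (1 - 2 * (n : ℤ)) = q ^ 3 * (q ^ 2)⁻¹ ^ (n + 1) := by
  rw [show 1 - 2 * (n : ℤ) = (3 : ℕ) + -((2 * (n + 1) : ℕ) : ℤ) by push_cast; ring,
    zpow_add₀ hq, zpow_neg]
  simp only [zpow_natCast, pow_mul, inv_pow]

lemma second_difference_mul (hq₀ : q ≠ 0) (hq₁ : q ≠ 1) :
    (1 / q) * (1 - 2 * q⁻¹ + (q ^ 2)⁻¹) * (q ^ 3 / (q - 1)) = q - 1 := by
  have : q - 1 ≠ 0 := sub_ne_zero.mpr hq₁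
  field_simp
  ring

lemma second_difference_mul_of_neg (hq₀ : q ≠ 0) (hq₁ : q ≠ 1) :
    (1 / q) * (q⁻¹ - 2 * q⁻¹ + (q ^ 2)⁻¹) * (q ^ 3 / (q - 1)) = -1 := by
  have : q - 1 ≠ 0 := sub_ne_zero.mpr hq₁
  field_simp
  ring

variable (y : ℝ) (a : ℕ)

lemma eq_natCast (hq₀ : q ≠ 0) (hq₁ : q ≠ 1) (n : ℕ) :
    antidiagonalTerm q y a n = (q - 1) * (q ^ 2)⁻¹ ^ (n + 1) := by
  rw [antidiagonalTerm, min_eq_right (by lia), min_eq_right (by lia), min_eq_right (by lia),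
    min_eq_right (by lia), min_eq_right (by lia), zpow_one_sub_two_mul_natCast hq₀]
  simp only [mul_zero, zero_sub, zpow_neg, zpow_ofNat]
  linear_combination (q ^ 2)⁻¹ ^ (n + 1) * second_difference_mul hq₀ hq₁

lemma eq_of_mem_Icc (hq₀ : q ≠ 0) (hq₁ : q ≠ 1) {e : ℤ} (he : e ∈ Finset.Icc (-(a : ℤ) - 1) (-1)) :
    antidiagonalTerm q y a e = (q - 1) * y ^ e := by
  rw [Finset.mem_Icc] at he
  rw [antidiagonalTerm, min_eq_right (by lia), min_eq_right (by lia), min_eq_right (by lia),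
    min_eq_left (by lia), min_eq_left (by lia)]
  have key := second_difference_mul hq₀ hq₁
  rw [← zpow_two_mul_add_one_mul_zpow_one_sub hq₀ e] at key
  simp only [zero_sub, zpow_neg, zpow_ofNat]
  linear_combination y ^ e * key

lemma eq_neg_sub_two (hq₀ : q ≠ 0) (hq₁ : q ≠ 1) :
    antidiagonalTerm q y a (-(a : ℤ) - 2) = -y ^ (-(a : ℤ) - 2) := by
  rw [antidiagonalTerm, show (a : ℤ) + (-(a : ℤ) - 2) + 1 = -1 by ring,
    show (a : ℤ) + (-(a : ℤ) - 2) + 2 = 0 by ring, show (a : ℤ) + (-(a : ℤ) - 2) + 3 = 1 by ring,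
    min_eq_left (by lia), min_self, min_eq_right (by lia), min_eq_left (by lia),
    min_eq_left (by lia)]
  have key := second_difference_mul_of_neg hq₀ hq₁
  rw [← zpow_two_mul_add_one_mul_zpow_one_sub hq₀ (-(a : ℤ) - 2)] at key
  simp only [zero_sub, zpow_neg, zpow_ofNat]
  linear_combination y ^ (-(a : ℤ) - 2) * key

lemma hasSum_natCast (hq : 1 < q) :
    HasSum (fun n : ℕ => antidiagonalTerm q y a n) (1 / (q + 1)) := by
  have hr : (q ^ 2)⁻¹ < 1 := inv_lt_one_of_one_lt₀ (one_lt_pow₀ hq two_ne_zero)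
  have hsum := (hasSum_geometric_of_lt_one (by positivity) hr).mul_left ((q - 1) * (q ^ 2)⁻¹)
  have hterm : (fun n : ℕ => antidiagonalTerm q y a n)
      = fun n => (q - 1) * (q ^ 2)⁻¹ * (q ^ 2)⁻¹ ^ n := by
    ext n
    rw [eq_natCast y a (by positivity) hq.ne', pow_succ']
    ring
  have hvalue : (q - 1) * (q ^ 2)⁻¹ * (1 - (q ^ 2)⁻¹)⁻¹ = 1 / (q + 1) := by
    have : q - 1 ≠ 0 := by linarith
    have : q ^ 2 - 1 ≠ 0 := by nlinarith
    field_simp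
    ring
  rwa [hterm, ← hvalue]

end antidiagonalTerm

theorem antidiagonal_contribution_third_general {q y : ℝ} (hq : 1 < q) (a : ℕ)
    (f : ℤ → ℝ)
    (hf : ∀ e : ℤ, -(a : ℤ) - 2 ≤ e →
      f e = (1 / q) * (q ^ (min ((a : ℤ) + e + 1) 0) - 2 * q ^ (min ((a : ℤ) + e + 2) 0 - 1)
            + q ^ (min ((a : ℤ) + e + 3) 0 - 2))
          * q ^ (2 * min (e + 1) 0) * y ^ (min e 0) * (q ^ (1 - 2 * e) / (q - 1))) :
    (Summable fun e : ℕ => f (e : ℤ)) ∧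
    f (-(a : ℤ) - 2) + (∑ e ∈ Finset.Icc (-(a : ℤ) - 1) (-1), f e)
        + ∑' e : ℕ, f (e : ℤ) =
      -y ^ (-(a : ℤ) - 2) + (q - 1) * (∑ e ∈ Finset.Icc (-(a : ℤ) - 1) (-1), y ^ e)
        + 1 / (q + 1) := by
  have hq₀ : q ≠ 0 := by positivity
  have hf' : ∀ e, -(a : ℤ) - 2 ≤ e → f e = antidiagonalTerm q y a e := hf
  have htail : HasSum (fun n : ℕ => f n) (1 / (q + 1)) := by
    convert antidiagonalTerm.hasSum_natCast y a hq using 2 with n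
    exact hf' n (by lia)
  refine ⟨htail.summable, ?_⟩
  have hmid : ∀ e ∈ Finset.Icc (-(a : ℤ) - 1) (-1), f e = (q - 1) * y ^ e := fun e he =>
    (hf' e (by rw [Finset.mem_Icc] at he; lia)).trans
      (antidiagonalTerm.eq_of_mem_Icc y a hq₀ hq.ne' he)
  rw [hf' _ le_rfl, antidiagonalTerm.eq_neg_sub_two y a hq₀ hq.ne', Finset.sum_congr rfl hmid,
    ← Finset.mul_sum, htail.tsum_eq]

/-- Evaluation of the contribution of the anti-diagonal orbit representatives in the
proof of the third local density formula of Theorem 6.2, with `y = q^{2r}`. -/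
theorem antidiagonal_contribution_third {q y : ℝ} (hq : 1 < q) (hy : 0 < y) (a : ℕ)
    (f : ℤ → ℝ)
    (hf : ∀ e : ℤ, -(a : ℤ) - 2 ≤ e →
      f e = (1 / q) * (q ^ (min ((a : ℤ) + e + 1) 0) - 2 * q ^ (min ((a : ℤ) + e + 2) 0 - 1)
            + q ^ (min ((a : ℤ) + e + 3) 0 - 2))
          * q ^ (2 * min (e + 1) 0) * y ^ (min e 0) * (q ^ (1 - 2 * e) / (q - 1))) :
    (Summable fun e : ℕ => f (e : ℤ)) ∧
    f (-(a : ℤ) - 2) + (∑ e ∈ Finset.Icc (-(a : ℤ) - 1) (-1), f e)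
        + ∑' e : ℕ, f (e : ℤ) =
      -y ^ (-(a : ℤ) - 2) + (q - 1) * (∑ e ∈ Finset.Icc (-(a : ℤ) - 1) (-1), y ^ e)
        + 1 / (q + 1) :=
  antidiagonal_contribution_third_general hq a f hf
end
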